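/- arXiv:math/0610880 — 3 statements merged into one kernel-verified Lean document; each statement's English description precedes it below -/
import Mathlib

section
/- Let H ≤ K be subgroups of a free group F. The following are equivalent: (a) H is contained in no proper free factor of K; (b) every element of K is K-algebraic over H (i.e. H ≤alg K); (c) there exists a subset X ⊆ K such that K is generated by H ∪ X and every x ∈ X is K-algebraic over H. -/
/-! Common definitions: free factors, algebraic extensions, rank, etc.,
following Miasnikov–Ventura–Weil, "Algebraic extensions in free groups". -/

section Defs

variable {G : Type*} [Group G]

/-- `H` is a free factor of `K` (`H ≤ff K`): there is a subgroup `L` such that the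
homomorphism from the external free product `H ∗ L` to `G` induced by the inclusions
is injective with image `K`. -/
def IsFreeFactor (H K : Subgroup G) : Prop :=
  ∃ L : Subgroup G,
    Function.Injective ⇑(Monoid.Coprod.lift H.subtype L.subtype) ∧
    (Monoid.Coprod.lift H.subtype L.subtype).range = K

/-- `x` is `K`-algebraic over `H`: `x` belongs to every free factor of `K` containing `H`. -/
def IsAlgebraicOver (H K : Subgroup G) (x : G) : Prop :=
  ∀ L : Subgroup G, IsFreeFactor L K → H ≤ L → x ∈ L

/-- The extension `H ≤ K` is algebraic (`H ≤alg K`). -/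
def IsAlgebraicExt (H K : Subgroup G) : Prop :=
  H ≤ K ∧ ∀ x ∈ K, IsAlgebraicOver H K x

/-- The rank of a subgroup: minimal number of generators, as an extended natural
(`⊤` if the subgroup is not finitely generated). For finitely generated subgroups of
free groups this is the rank of a basis. -/
noncomputable def grpRank (H : Subgroup G) : ℕ∞ :=
  ⨅ (S : Finset G) (_ : Subgroup.closure (S : Set G) = H), (S.card : ℕ∞)

/-- `H ≤ealg K`: the extension splits as a finite chain of extensions, each of which
is both elementary and algebraic. -/
def IsEAlgebraicExt (H K : Subgroup G) : Prop :=
  Relation.ReflTransGen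
    (fun A B : Subgroup G => (∃ x : G, B = A ⊔ Subgroup.zpowers x) ∧ IsAlgebraicExt A B) H K

/-- A Takahasi family for `H`: a set of subgroups, each containing `H`, such that every
extension of `H` admits a member of the family as a free factor. -/
def IsTakahasiFamily (H : Subgroup G) (𝓛 : Set (Subgroup G)) : Prop :=
  (∀ L ∈ 𝓛, H ≤ L) ∧ ∀ K : Subgroup G, H ≤ K → ∃ L ∈ 𝓛, IsFreeFactor L K

end Defs

section

variable {G : Type*} [Group G]

theorem IsFreeFactor.le {L K : Subgroup G} (h : IsFreeFactor L K) : L ≤ K := by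
  obtain ⟨M, -, hrange⟩ := h
  intro l hl
  rw [← hrange]
  exact ⟨Monoid.Coprod.inl ⟨l, hl⟩, by simp⟩

theorem isAlgebraicOver_of_mem {H K : Subgroup G} {x : G} (hx : x ∈ H) :
    IsAlgebraicOver H K x :=
  fun _ _ hHL => hHL hx

/-- The `K`-algebraic elements over `H` form a subgroup: the intersection of the free factors
of `K` containing `H`. -/
theorem isAlgebraicOver_of_mem_closure {H K : Subgroup G} {S : Set G}
    (hS : ∀ s ∈ S, IsAlgebraicOver H K s) {x : G} (hx : x ∈ Subgroup.closure S) :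
    IsAlgebraicOver H K x :=
  fun L hL hHL => (Subgroup.closure_le L).mpr (fun s hs => hS s hs L hL hHL) hx

theorem isAlgebraicExt_iff_not_le_proper_freeFactor {H K : Subgroup G} (hHK : H ≤ K) :
    IsAlgebraicExt H K ↔ ¬ ∃ L : Subgroup G, IsFreeFactor L K ∧ L ≠ K ∧ H ≤ L := by
  constructor
  · rintro ⟨-, halg⟩ ⟨L, hL, hne, hHL⟩
    exact hne (le_antisymm hL.le fun k hk => halg k hk L hL hHL)
  · intro hno
    refine ⟨hHK, fun x hx L hL hHL => ?_⟩
    by_cases hLK : L = K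
    · exact hLK ▸ hx
    · exact absurd ⟨L, hL, hLK, hHL⟩ hno

theorem isAlgebraicExt_iff_exists_algebraic_generators {H K : Subgroup G} (hHK : H ≤ K) :
    IsAlgebraicExt H K ↔
      ∃ X : Set G, X ⊆ (K : Set G) ∧ K = Subgroup.closure ((H : Set G) ∪ X) ∧
        ∀ x ∈ X, IsAlgebraicOver H K x := by
  constructor
  · rintro ⟨-, halg⟩
    refine ⟨K, subset_rfl, ?_, halg⟩
    rw [Set.union_eq_self_of_subset_left hHK, Subgroup.closure_eq]
  · rintro ⟨X, -, hK, halgX⟩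
    refine ⟨hHK, fun x hx => isAlgebraicOver_of_mem_closure ?_ (hK ▸ hx)⟩
    rintro s (hs | hs)
    · exact isAlgebraicOver_of_mem hs
    · exact halgX s hs

end

theorem algebraicExt_tfae_general {G : Type*} [Group G]
    (H K : Subgroup G) (hHK : H ≤ K) :
    ((¬ ∃ L : Subgroup G, IsFreeFactor L K ∧ L ≠ K ∧ H ≤ L) ↔ IsAlgebraicExt H K) ∧
    (IsAlgebraicExt H K ↔
      ∃ X : Set G, X ⊆ (K : Set G) ∧ K = Subgroup.closure ((H : Set G) ∪ X) ∧
        ∀ x ∈ X, IsAlgebraicOver H K x) :=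
  ⟨(isAlgebraicExt_iff_not_le_proper_freeFactor hHK).symm,
    isAlgebraicExt_iff_exists_algebraic_generators hHK⟩

/-- Characterizations of algebraic extensions: (a) `H` is contained in no proper free
factor of `K`; (b) `H ≤alg K`; (c) `K` is generated by `H ∪ X` with every `x ∈ X`
`K`-algebraic over `H`. -/
theorem algebraicExt_tfae {G : Type*} [Group G] [IsFreeGroup G]
    (H K : Subgroup G) (hHK : H ≤ K) :
    ((¬ ∃ L : Subgroup G, IsFreeFactor L K ∧ L ≠ K ∧ H ≤ L) ↔ IsAlgebraicExt H K) ∧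
    (IsAlgebraicExt H K ↔
      ∃ X : Set G, X ⊆ (K : Set G) ∧ K = Subgroup.closure ((H : Set G) ∪ X) ∧
        ∀ x ∈ X, IsAlgebraicOver H K x) :=
  algebraicExt_tfae_general H K hHK
end

section
/- Let H be a finitely generated subgroup of a free group F and let H ≤ealg K be an e-algebraic extension inside F. Then rk(K) ≤ rk(H). -/
universe u

section RF

open FreeGroup Function

variable {α : Type*} [DecidableEq α]

private lemma reduced_no_cancel {L : List (α × Bool)} (hL : FreeGroup.reduce L = L)
    {j : ℕ} {a : α} {b : Bool} (h1 : L[j]? = some (a, b)) (h2 : L[j + 1]? = some (a, !b)) :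
    False := by
  rw [List.getElem?_eq_some_iff] at h1 h2
  obtain ⟨hj1, e2⟩ := h2
  obtain ⟨hj, e1⟩ := h1
  have hdecomp : L = L.take j ++ (a, b) :: (a, !b) :: L.drop (j + 2) := by
    conv_lhs => rw [← List.take_append_drop j L]
    congr 1
    rw [List.drop_eq_getElem_cons hj, List.drop_eq_getElem_cons hj1, e1, e2]
  exact FreeGroup.reduce.not (hL.trans hdecomp)

private def Pd (L : List (α × Bool)) (a : α) (t : Fin (L.length + 1)) : Prop :=
  L[(t : ℕ)]? = some (a, false) ∨ 0 < (t : ℕ) ∧ L[(t : ℕ) - 1]? = some (a, true)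

private def Pc (L : List (α × Bool)) (a : α) (t : Fin (L.length + 1)) : Prop :=
  L[(t : ℕ)]? = some (a, true) ∨ 0 < (t : ℕ) ∧ L[(t : ℕ) - 1]? = some (a, false)

private instance (L : List (α × Bool)) (a : α) : DecidablePred (Pd L a) := fun t => by
  unfold Pd; infer_instance

private instance (L : List (α × Bool)) (a : α) : DecidablePred (Pc L a) := fun t => by
  unfold Pc; infer_instance

private def moveEquiv {L : List (α × Bool)} (a : α) (hL : FreeGroup.reduce L = L) :
    {t : Fin (L.length + 1) // Pd L a t} ≃ {t : Fin (L.length + 1) // Pc L a t} where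
  toFun x :=
    if h : L[(x.1 : ℕ)]? = some (a, false) then
      ⟨⟨(x.1 : ℕ) + 1, by have := (List.getElem?_eq_some_iff.mp h).1; omega⟩, by
        refine Or.inr ⟨by simp, ?_⟩
        simpa using h⟩
    else
      ⟨⟨(x.1 : ℕ) - 1, by have := x.1.isLt; omega⟩, by
        obtain h' | h' := x.2
        · exact absurd h' h
        · exact Or.inl h'.2⟩
  invFun x :=
    if h : L[(x.1 : ℕ)]? = some (a, true) then
      ⟨⟨(x.1 : ℕ) + 1, by have := (List.getElem?_eq_some_iff.mp h).1; omega⟩, by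
        refine Or.inr ⟨by simp, ?_⟩
        simpa using h⟩
    else
      ⟨⟨(x.1 : ℕ) - 1, by have := x.1.isLt; omega⟩, by
        obtain h' | h' := x.2
        · exact absurd h' h
        · exact Or.inl h'.2⟩
  left_inv := by
    rintro ⟨t, ht⟩
    dsimp only
    by_cases h : L[(t : ℕ)]? = some (a, false)
    · rw [dif_pos h]
      have hne : ¬ (L[((t : ℕ) + 1)]? = some (a, true)) := fun hcon =>
        (reduced_no_cancel hL h (by simpa using hcon))
      rw [dif_neg (by simpa using hne)]
      ext
      simp
    · rw [dif_neg h]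
      have h' : 0 < (t : ℕ) ∧ L[(t : ℕ) - 1]? = some (a, true) := ht.resolve_left h
      rw [dif_pos (by simpa using h'.2)]
      ext
      have := h'.1
      simp
      omega
  right_inv := by
    rintro ⟨t, ht⟩
    dsimp only
    by_cases h : L[(t : ℕ)]? = some (a, true)
    · rw [dif_pos h]
      have hne : ¬ (L[((t : ℕ) + 1)]? = some (a, false)) := fun hcon =>
        (reduced_no_cancel hL h (by simpa using hcon))
      rw [dif_neg (by simpa using hne)]
      ext
      simp
    · rw [dif_neg h]
      have h' : 0 < (t : ℕ) ∧ L[(t : ℕ) - 1]? = some (a, false) := ht.resolve_left h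
      rw [dif_pos (by simpa using h'.2)]
      ext
      have := h'.1
      simp
      omega

private noncomputable def stallings {L : List (α × Bool)} (a : α) (hL : FreeGroup.reduce L = L) :
    Equiv.Perm (Fin (L.length + 1)) :=
  Equiv.extendSubtype (moveEquiv a hL)

private lemma stallings_apply_false {L : List (α × Bool)} (a : α) (hL : FreeGroup.reduce L = L)
    {j : ℕ} (h : L[j]? = some (a, false)) (hj : j < L.length + 1) (hj1 : j + 1 < L.length + 1) :
    stallings a hL ⟨j, hj⟩ = ⟨j + 1, hj1⟩ := by
  have hdom : Pd L a ⟨j, hj⟩ := Or.inl h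
  rw [stallings, Equiv.extendSubtype_apply_of_mem _ _ hdom]
  have : (moveEquiv a hL ⟨⟨j, hj⟩, hdom⟩ : Fin (L.length + 1)) = ⟨j + 1, hj1⟩ := by
    rw [moveEquiv]
    simp only [Equiv.coe_fn_mk, dif_pos h]
  exact this

private lemma stallings_apply_true {L : List (α × Bool)} (a : α) (hL : FreeGroup.reduce L = L)
    {j : ℕ} (h : L[j]? = some (a, true)) (hj : j < L.length + 1) (hj1 : j + 1 < L.length + 1) :
    stallings a hL ⟨j + 1, hj1⟩ = ⟨j, hj⟩ := by
  have hdom : Pd L a ⟨j + 1, hj1⟩ := Or.inr ⟨by simp, by simpa using h⟩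
  rw [stallings, Equiv.extendSubtype_apply_of_mem _ _ hdom]
  have hne : ¬ (L[j + 1]? = some (a, false)) := fun hcon =>
    (reduced_no_cancel hL h (by simpa using hcon))
  have : (moveEquiv a hL ⟨⟨j + 1, hj1⟩, hdom⟩ : Fin (L.length + 1)) = ⟨j, hj⟩ := by
    rw [moveEquiv]
    simp only [Equiv.coe_fn_mk, dif_neg hne]
    exact Fin.ext (by simp)
  exact this

/-- Free groups are residually finite, in the form needed below. -/
private lemma exists_perm_hom (w : FreeGroup α) (hw : w ≠ 1) :
    ∃ (N : ℕ) (π : FreeGroup α →* Equiv.Perm (Fin N)), π w ≠ 1 := by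
  classical
  set L := w.toWord with hLdef
  have hL : FreeGroup.reduce L = L := FreeGroup.reduce_toWord w
  refine ⟨L.length + 1, FreeGroup.lift (fun a => stallings a hL), ?_⟩
  have hk : L.length ≠ 0 := by
    intro h0
    exact hw (FreeGroup.toWord_eq_nil_iff.mp (List.length_eq_zero_iff.mp h0))
  have key : ∀ n j (hj : j + n = L.length),
      (List.prod ((L.drop j).map fun x => cond x.2 (stallings x.1 hL) (stallings x.1 hL)⁻¹))
        ⟨L.length, by omega⟩ = ⟨j, by omega⟩ := by
    intro n
    induction n with
    | zero =>
      intro j hj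
      rw [List.drop_eq_nil_of_le (by omega)]
      simp only [List.map_nil, List.prod_nil, Equiv.Perm.one_apply, Fin.ext_iff]
      omega
    | succ n ih =>
      intro j hj
      have hjlt : j < L.length := by omega
      rw [List.drop_eq_getElem_cons hjlt]
      rcases hab : L[j] with ⟨b1, b2⟩
      have hsome : L[j]? = some (b1, b2) := by
        rw [List.getElem?_eq_some_iff]; exact ⟨hjlt, hab⟩
      rw [List.map_cons, List.prod_cons]
      have IH := ih (j + 1) (by omega)
      cases b2 with
      | false =>
        simp only [cond_false, Equiv.Perm.mul_apply]
        rw [IH]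
        have h1 := stallings_apply_false b1 hL hsome (by omega) (by omega)
        rw [← h1, Equiv.Perm.inv_def, Equiv.symm_apply_apply]
      | true =>
        simp only [cond_true, Equiv.Perm.mul_apply]
        rw [IH]
        exact stallings_apply_true b1 hL hsome (by omega) (by omega)
  have hcomp : FreeGroup.lift (fun a => stallings a hL) w =
      List.prod (L.map fun x => cond x.2 (stallings x.1 hL) (stallings x.1 hL)⁻¹) := by
    conv_lhs => rw [← FreeGroup.mk_toWord (x := w)]
    exact FreeGroup.lift_mk
  intro hcon
  have h0 := key L.length 0 (by omega)
  rw [List.drop_zero, ← hcomp, hcon] at h0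
  simp only [Equiv.Perm.one_apply, Fin.ext_iff] at h0
  omega

/-- fg free groups are Hopfian. -/
private lemma freeGroup_hopf {β : Type*} [Finite β] (f : FreeGroup β →* FreeGroup β)
    (hf : Surjective f) : Injective f := by
  classical
  rw [← MonoidHom.ker_eq_bot_iff]
  by_contra hne
  obtain ⟨w, hwker, hw⟩ : ∃ w, w ∈ f.ker ∧ w ≠ 1 := by
    rcases Subgroup.bot_or_exists_ne_one f.ker with h | h
    · exact absurd h hne
    · obtain ⟨w, hw1, hw2⟩ := h; exact ⟨w, hw1, hw2⟩
  obtain ⟨N, π, hπ⟩ := exists_perm_hom w hw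
  have hfin : Finite (FreeGroup β →* Equiv.Perm (Fin N)) :=
    Finite.of_equiv _ FreeGroup.lift
  have hinj : Injective (fun h : FreeGroup β →* Equiv.Perm (Fin N) => h.comp f) := by
    intro h1 h2 he
    exact (MonoidHom.cancel_right hf).mp he
  obtain ⟨h, hh⟩ := (Finite.injective_iff_surjective.mp hinj) π
  apply hπ
  have h2 : π w = h (f w) := by rw [← hh]; rfl
  have h3 : f w = 1 := hwker
  rw [h2, h3]
  exact map_one h

end RF

section RankBound

open Function Subgroup

private lemma basis_card_le {H : Type u} [Group H] {ι : Type u} (b : FreeGroupBasis ι H)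
    (T : Finset H) (hT : Subgroup.closure (T : Set H) = ⊤) :
    Cardinal.mk ι ≤ (T.card : Cardinal) := by
  classical
  set ab : FreeGroup ι →* Multiplicative (ι →₀ ℤ) :=
    FreeGroup.lift (fun i => Multiplicative.ofAdd (Finsupp.single i 1)) with hab
  set φ : H → (ι →₀ ℤ) := fun h => (ab (b.repr h)).toAdd with hφ
  set s : Set (ι →₀ ℤ) := φ '' (T : Set H) with hs
  have hmem : ∀ h : H, φ h ∈ Submodule.span ℤ s := by
    intro h
    have hK : ∀ g ∈ Subgroup.closure (T : Set H), φ g ∈ Submodule.span ℤ s := by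
      intro g hg
      induction hg using Subgroup.closure_induction with
      | mem y hy => exact Submodule.subset_span ⟨y, hy, rfl⟩
      | one =>
        have : φ 1 = 0 := by simp [hφ]
        rw [this]; exact (Submodule.span ℤ s).zero_mem
      | mul u v hu hv hiu hiv =>
        have : φ (u * v) = φ u + φ v := by simp [hφ]
        rw [this]; exact add_mem hiu hiv
      | inv u hu hiu =>
        have : φ u⁻¹ = -φ u := by simp [hφ]
        rw [this]; exact neg_mem hiu
    exact hK h (hT ▸ Subgroup.mem_top h)
  have hspan : Submodule.span ℤ s = ⊤ := by
    have h1 : Submodule.span ℤ (Set.range fun i : ι => Finsupp.single i (1 : ℤ)) = ⊤ := by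
      have := (Finsupp.basisSingleOne (R := ℤ) (ι := ι)).span_eq
      simpa [Finsupp.coe_basisSingleOne] using this
    rw [eq_top_iff, ← h1]
    apply Submodule.span_le.mpr
    rintro _ ⟨i, rfl⟩
    have h2 : Finsupp.single i (1 : ℤ) = φ (b i) := by
      simp [hφ, hab, FreeGroupBasis.repr_apply_coe, FreeGroup.lift_apply_of]
    show Finsupp.single i (1 : ℤ) ∈ (Submodule.span ℤ s : Set _)
    rw [h2]
    exact SetLike.mem_coe.mpr (hmem _)
  calc (Cardinal.mk ι) = Module.rank ℤ (ι →₀ ℤ) := by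
        rw [rank_finsupp_self]; simp
    _ = Module.rank ℤ (Submodule.span ℤ s) := by rw [hspan, rank_top]
    _ ≤ Cardinal.mk s := rank_span_le s
    _ ≤ Cardinal.mk (T : Set H) := Cardinal.mk_image_le
    _ = (T.card : Cardinal) := Cardinal.mk_coe_finset

private lemma basis_finite {H : Type u} [Group H] {ι : Type u} (b : FreeGroupBasis ι H)
    (T : Finset H) (hT : Subgroup.closure (T : Set H) = ⊤) : Finite ι := by
  have := basis_card_le b T hT
  rw [← Cardinal.mk_lt_aleph0_iff]
  exact this.trans_lt (Cardinal.nat_lt_aleph0 _)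

private lemma basis_natCard_le {H : Type u} [Group H] {ι : Type u} (b : FreeGroupBasis ι H)
    (T : Finset H) (hT : Subgroup.closure (T : Set H) = ⊤) : Nat.card ι ≤ T.card := by
  have hfin : Finite ι := basis_finite b T hT
  have := basis_card_le b T hT
  have hcast : (Nat.card ι : Cardinal) = Cardinal.mk ι := by
    cases nonempty_fintype ι
    simp [Nat.card_eq_fintype_card, Cardinal.mk_fintype]
  rw [← Nat.cast_le (α := Cardinal)]
  rw [hcast]
  exact this

/-- A generating family of the right cardinality in a finitely generated free group
is a free basis. -/
private lemma lift_injective_of_card {H : Type u} [Group H] {ι : Type u} {κ : Type*}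
    [Finite ι] [Finite κ] (b : FreeGroupBasis ι H) (hc : Nat.card κ = Nat.card ι)
    (t : κ → H) (ht : Subgroup.closure (Set.range t) = ⊤) :
    Function.Injective (FreeGroup.lift t) := by
  classical
  cases nonempty_fintype ι
  cases nonempty_fintype κ
  have e : ι ≃ κ := Fintype.equivOfCardEq (by
    rw [← Nat.card_eq_fintype_card, ← Nat.card_eq_fintype_card, hc])
  set b' : FreeGroupBasis κ H := b.reindex e with hb'
  set g : FreeGroup κ →* FreeGroup κ := (b'.repr.toMonoidHom).comp (FreeGroup.lift t) with hg
  have hsurj : Surjective g := by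
    apply Function.Surjective.comp b'.repr.surjective
    rw [← MonoidHom.range_eq_top, FreeGroup.range_lift_eq_closure, ht]
  have hinj : Injective g := freeGroup_hopf g hsurj
  have : Injective (⇑b'.repr ∘ ⇑(FreeGroup.lift t)) := hinj
  exact this.of_comp

end RankBound
section FF

open Function Subgroup

/-- If the inclusion of `insert x S` induces an injective map from the free group on
`insert x S` to `closure (insert x S)`, then `closure S` is a free factor of it,
with complement `zpowers x`. -/
private lemma isFreeFactor_of_inj {G : Type u} [Group G] [DecidableEq G] (S : Finset G) (x : G)
    (hxS : x ∉ (S : Set G))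
    (t : {y // y ∈ insert x S} → ↥(Subgroup.closure ((insert x S : Finset G) : Set G)))
    (hty : ∀ y, (t y : G) = y)
    (hinj : Function.Injective (FreeGroup.lift t)) :
    IsFreeFactor (Subgroup.closure (S : Set G))
      (Subgroup.closure ((insert x S : Finset G) : Set G)) := by
  classical
  have hTdef : (insert x S : Finset G) = insert x S := rfl
  let T : Finset G := insert x S
  let B : Subgroup G := Subgroup.closure (T : Set G)
  let A : Subgroup G := Subgroup.closure (S : Set G)
  have hAB : A ≤ B := Subgroup.closure_mono (by simp [T])
  have hxT : x ∈ T := Finset.mem_insert_self x S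
  have hxB : x ∈ B := Subgroup.subset_closure (Finset.mem_coe.mpr hxT)
  have hzB : Subgroup.zpowers x ≤ B := Subgroup.zpowers_le.mpr hxB
  let Φ : Monoid.Coprod ↥A ↥(Subgroup.zpowers x) →* G :=
    Monoid.Coprod.lift A.subtype (Subgroup.zpowers x).subtype
  have hΦinl : ∀ (a : ↥A), Φ (Monoid.Coprod.inl a) = (a : G) := fun a =>
    Monoid.Coprod.lift_apply_inl _ _ _
  have hΦinr : ∀ (a : ↥(Subgroup.zpowers x)), Φ (Monoid.Coprod.inr a) = (a : G) := fun a =>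
    Monoid.Coprod.lift_apply_inr _ _ _
  have hΦmem : ∀ w, Φ w ∈ B := by
    intro w
    induction w using Monoid.Coprod.induction_on with
    | inl a => rw [hΦinl]; exact hAB a.2
    | inr a => rw [hΦinr]; exact hzB a.2
    | mul u v hu hv => rw [map_mul]; exact mul_mem hu hv
  let Φ' : Monoid.Coprod ↥A ↥(Subgroup.zpowers x) →* ↥B := Φ.codRestrict B hΦmem
  -- surjectivity of `FreeGroup.lift t`
  have hrange : Set.range t = (B.subtype ⁻¹' (T : Set G)) := by
    ext w
    simp only [Set.mem_range, Set.mem_preimage, Subgroup.coe_subtype]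
    constructor
    · rintro ⟨z, hz⟩
      rw [← hz, hty]
      exact Finset.mem_coe.mpr z.2
    · intro h
      exact ⟨⟨(w : G), Finset.mem_coe.mp h⟩, Subtype.ext (hty _)⟩
  have hgen : Subgroup.closure (Set.range t) = ⊤ := by
    rw [hrange]
    exact Subgroup.closure_preimage_eq_top (T : Set G)
  have hsurj : Surjective (FreeGroup.lift t) := by
    rw [← MonoidHom.range_eq_top, FreeGroup.range_lift_eq_closure, hgen]
  let e : FreeGroup {y // y ∈ T} ≃* ↥B :=
    MulEquiv.ofBijective (FreeGroup.lift t) ⟨hinj, hsurj⟩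
  have he_apply : ∀ z, e z = FreeGroup.lift t z := fun _ => rfl
  have he_of : ∀ y, e.symm (t y) = FreeGroup.of y := by
    intro y
    rw [MulEquiv.symm_apply_eq, he_apply, FreeGroup.lift_apply_of]
  let c : FreeGroup {y // y ∈ T} →* Monoid.Coprod ↥A ↥(Subgroup.zpowers x) :=
    FreeGroup.lift (fun y => if h : (y : G) ∈ S then
        Monoid.Coprod.inl (⟨y, Subgroup.subset_closure (Finset.mem_coe.mpr h)⟩ : ↥A)
      else
        Monoid.Coprod.inr (⟨(y : G), by
          rcases Finset.mem_insert.mp y.2 with h' | h'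
          · rw [h']; exact Subgroup.mem_zpowers x
          · exact absurd h' h⟩ : ↥(Subgroup.zpowers x)))
  let χ : ↥B →* Monoid.Coprod ↥A ↥(Subgroup.zpowers x) := c.comp e.symm.toMonoidHom
  have hχt : ∀ (y : {y // y ∈ T}), χ (t y) = (if h : (y : G) ∈ S then
      Monoid.Coprod.inl (⟨y, Subgroup.subset_closure (Finset.mem_coe.mpr h)⟩ : ↥A)
    else
      Monoid.Coprod.inr (⟨(y : G), by
        rcases Finset.mem_insert.mp y.2 with h' | h'
        · rw [h']; exact Subgroup.mem_zpowers x
        · exact absurd h' h⟩ : ↥(Subgroup.zpowers x))) := by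
    intro y
    show c (e.symm (t y)) = _
    rw [he_of, FreeGroup.lift_apply_of]
  have hid : χ.comp Φ' = MonoidHom.id _ := by
    apply Monoid.Coprod.hom_ext
    · -- on inl
      ext a
      rcases a with ⟨a, ha⟩
      simp only [MonoidHom.comp_apply, MonoidHom.id_apply]
      show χ (Φ' (Monoid.Coprod.inl ⟨a, ha⟩)) = Monoid.Coprod.inl ⟨a, ha⟩
      have hval : Φ' (Monoid.Coprod.inl ⟨a, ha⟩) = ⟨a, hAB ha⟩ := by
        apply Subtype.ext
        show Φ (Monoid.Coprod.inl ⟨a, ha⟩) = a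
        exact hΦinl _
      rw [hval]
      clear hval
      induction ha using Subgroup.closure_induction with
      | mem y hy =>
        have hyT : y ∈ T := Finset.mem_insert_of_mem (Finset.mem_coe.mp hy)
        have h1 : (⟨y, hAB (Subgroup.subset_closure hy)⟩ : ↥B) = t ⟨y, hyT⟩ :=
          Subtype.ext (hty ⟨y, hyT⟩).symm
        rw [h1, hχt]
        have hyS : ((⟨y, hyT⟩ : {y // y ∈ T}) : G) ∈ S := Finset.mem_coe.mp hy
        rw [dif_pos hyS]
      | one =>
        have h1 : (⟨1, hAB (one_mem A)⟩ : ↥B) = 1 := rfl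
        rw [h1, map_one]
        have : (⟨1, one_mem A⟩ : ↥A) = 1 := rfl
        rw [this, map_one]
      | mul u v hu hv hiu hiv =>
        have h1 : (⟨u * v, hAB (mul_mem hu hv)⟩ : ↥B) = ⟨u, hAB hu⟩ * ⟨v, hAB hv⟩ := rfl
        rw [h1, map_mul, hiu, hiv, ← map_mul]
        rfl
      | inv u hu hiu =>
        have h1 : (⟨u⁻¹, hAB (inv_mem hu)⟩ : ↥B) = (⟨u, hAB hu⟩ : ↥B)⁻¹ := rfl
        rw [h1, map_inv, hiu, ← map_inv]
        rfl
    · -- on inr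
      ext a
      rcases a with ⟨y, hy⟩
      obtain ⟨n, rfl⟩ := Subgroup.mem_zpowers_iff.mp hy
      simp only [MonoidHom.comp_apply, MonoidHom.id_apply]
      show χ (Φ' (Monoid.Coprod.inr ⟨x ^ n, hy⟩)) = Monoid.Coprod.inr ⟨x ^ n, hy⟩
      have hval : Φ' (Monoid.Coprod.inr ⟨x ^ n, hy⟩) = (⟨x, hxB⟩ : ↥B) ^ n := by
        apply Subtype.ext
        show Φ (Monoid.Coprod.inr ⟨x ^ n, hy⟩) = ((⟨x, hxB⟩ : ↥B) ^ n : ↥B)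
        rw [hΦinr]
        simp
      rw [hval, map_zpow]
      have hxt : (⟨x, hxB⟩ : ↥B) = t ⟨x, hxT⟩ := Subtype.ext (hty ⟨x, hxT⟩).symm
      rw [hxt, hχt]
      have hxnotS : ¬ (((⟨x, hxT⟩ : {y // y ∈ T}) : G) ∈ S) := fun h => hxS (Finset.mem_coe.mpr h)
      rw [dif_neg hxnotS, ← map_zpow]
      congr 1
  have hli : Function.LeftInverse ⇑χ ⇑Φ' := fun w => DFunLike.congr_fun hid w
  have hinjΦ' : Function.Injective ⇑Φ' := hli.injective
  have hinjΦ : Function.Injective ⇑Φ := by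
    have hcoe : ⇑Φ = Subtype.val ∘ ⇑Φ' := rfl
    rw [hcoe]
    exact Subtype.val_injective.comp hinjΦ'
  refine ⟨Subgroup.zpowers x, hinjΦ, ?_⟩
  apply le_antisymm
  · rintro g ⟨w, rfl⟩
    exact hΦmem w
  · rw [Subgroup.closure_le]
    intro y hy
    rcases Set.mem_insert_iff.mp (by rwa [Finset.coe_insert] at hy) with h' | h'
    · exact ⟨Monoid.Coprod.inr ⟨x, Subgroup.mem_zpowers x⟩, by rw [hΦinr]; exact h'.symm ▸ rfl⟩
    · exact ⟨Monoid.Coprod.inl ⟨y, Subgroup.subset_closure h'⟩, hΦinl _⟩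

end FF

section Step

open Subgroup Function

private lemma grpRank_le_card {G : Type u} [Group G] {H : Subgroup G} {S : Finset G}
    (hS : Subgroup.closure (S : Set G) = H) : grpRank H ≤ (S.card : ℕ∞) := by
  show (⨅ (S : Finset G) (_ : Subgroup.closure (S : Set G) = H), (S.card : ℕ∞)) ≤ _
  exact iInf_le_of_le S (iInf_le _ hS)

private lemma closure_range_coe_top {G : Type u} [Group G] (T : Finset G)
    (t : {y // y ∈ T} → ↥(Subgroup.closure (T : Set G))) (hty : ∀ y, (t y : G) = y) :
    Subgroup.closure (Set.range t) = ⊤ := by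
  have hrange : Set.range t = ((Subgroup.closure (T : Set G)).subtype ⁻¹' (T : Set G)) := by
    ext w
    simp only [Set.mem_range, Set.mem_preimage, Subgroup.coe_subtype]
    constructor
    · rintro ⟨z, hz⟩
      rw [← hz, hty]
      exact Finset.mem_coe.mpr z.2
    · intro h
      exact ⟨⟨(w : G), Finset.mem_coe.mp h⟩, Subtype.ext (hty _)⟩
  rw [hrange]
  exact Subgroup.closure_preimage_eq_top (T : Set G)

private lemma step {G : Type u} [Group G] [IsFreeGroup G] {A B : Subgroup G} (x : G)
    (hB : B = A ⊔ Subgroup.zpowers x) (halg : IsAlgebraicExt A B) :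
    grpRank B ≤ grpRank A := by
  classical
  show grpRank B ≤ ⨅ (S : Finset G) (_ : Subgroup.closure (S : Set G) = A), (S.card : ℕ∞)
  refine le_iInf fun S => le_iInf fun hS => ?_
  by_cases hx : x ∈ A
  · have hBA : B = A := by
      rw [hB, sup_eq_left]
      exact Subgroup.zpowers_le.mpr hx
    rw [hBA]
    exact grpRank_le_card hS
  · have hxS : x ∉ (S : Set G) := fun h => hx (hS ▸ Subgroup.subset_closure h)
    have hxS' : x ∉ S := fun h => hxS (Finset.mem_coe.mpr h)
    have hBc : B = Subgroup.closure ((insert x S : Finset G) : Set G) := by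
      rw [Finset.coe_insert, Set.insert_eq, Subgroup.closure_union,
        ← Subgroup.zpowers_eq_closure, hS, hB, sup_comm]
    let b : FreeGroupBasis (IsFreeGroup.Generators ↥(Subgroup.closure ((insert x S : Finset G) : Set G)))
        ↥(Subgroup.closure ((insert x S : Finset G) : Set G)) := IsFreeGroup.basis _
    let t : {y // y ∈ insert x S} → ↥(Subgroup.closure ((insert x S : Finset G) : Set G)) :=
      fun y => ⟨y.1, Subgroup.subset_closure (Finset.mem_coe.mpr y.2)⟩
    have hty : ∀ y, (t y : G) = y := fun y => rfl
    have hgen : Subgroup.closure (Set.range t) = ⊤ := closure_range_coe_top (insert x S) t hty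
    let T' : Finset ↥(Subgroup.closure ((insert x S : Finset G) : Set G)) := Finset.univ.image t
    have hT'coe : (T' : Set ↥(Subgroup.closure ((insert x S : Finset G) : Set G))) = Set.range t := by
      rw [Finset.coe_image, Finset.coe_univ, Set.image_univ]
    have hgen' : Subgroup.closure
        (T' : Set ↥(Subgroup.closure ((insert x S : Finset G) : Set G))) = ⊤ := by
      rw [hT'coe]; exact hgen
    have hfinι : Finite (IsFreeGroup.Generators ↥(Subgroup.closure ((insert x S : Finset G) : Set G))) :=
      basis_finite b T' hgen'
    have hcardle : Nat.card (IsFreeGroup.Generators ↥(Subgroup.closure ((insert x S : Finset G) : Set G)))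
        ≤ T'.card := basis_natCard_le b T' hgen'
    have hT'le : T'.card ≤ S.card + 1 := by
      calc T'.card ≤ Fintype.card {y // y ∈ insert x S} :=
            Finset.card_image_le.trans (by rw [Finset.card_univ])
        _ = (insert x S).card := Fintype.card_coe _
        _ = S.card + 1 := Finset.card_insert_of_notMem hxS'
    rcases le_or_gt
        (Nat.card (IsFreeGroup.Generators ↥(Subgroup.closure ((insert x S : Finset G) : Set G))))
        S.card with hle | hgt
    · -- the basis gives a generating set of `B` of size at most `S.card`
      cases nonempty_fintype (IsFreeGroup.Generators ↥(Subgroup.closure ((insert x S : Finset G) : Set G)))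
      let U : Finset G := Finset.univ.image
        (fun i : IsFreeGroup.Generators ↥(Subgroup.closure ((insert x S : Finset G) : Set G)) =>
          ((b i : ↥(Subgroup.closure ((insert x S : Finset G) : Set G))) : G))
      have hU : Subgroup.closure (U : Set G) = B := by
        have h1 : (U : Set G) =
            (Subgroup.closure ((insert x S : Finset G) : Set G)).subtype '' (Set.range ⇑b) := by
          rw [← Set.range_comp]
          simp [U]
          rfl
        rw [h1, ← MonoidHom.map_closure]
        have hsame : FreeGroup.lift ⇑b =
            (b.repr.symm : FreeGroup _ ≃* _).toMonoidHom := by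
          apply FreeGroup.ext_hom
          intro a
          rw [FreeGroup.lift_apply_of]
          rfl
        have h2 : Subgroup.closure (Set.range ⇑b) = ⊤ := by
          rw [← FreeGroup.range_lift_eq_closure, hsame, MonoidHom.range_eq_top]
          exact b.repr.symm.surjective
        rw [h2, ← MonoidHom.range_eq_map, Subgroup.range_subtype, hBc]
      have hUcard : U.card ≤ S.card := by
        have h1 : U.card ≤ Fintype.card
            (IsFreeGroup.Generators ↥(Subgroup.closure ((insert x S : Finset G) : Set G))) :=
          Finset.card_image_le.trans (by rw [Finset.card_univ])
        rw [← Nat.card_eq_fintype_card] at h1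
        omega
      calc grpRank B ≤ (U.card : ℕ∞) := grpRank_le_card hU
        _ ≤ (S.card : ℕ∞) := by exact_mod_cast hUcard
    · -- Hopfian case: `insert x S` is a free basis of `B`, contradicting algebraicity
      exfalso
      have hcards : Nat.card {y // y ∈ insert x S} =
          Nat.card (IsFreeGroup.Generators ↥(Subgroup.closure ((insert x S : Finset G) : Set G))) := by
        have h3 : Nat.card {y // y ∈ insert x S} = S.card + 1 := by
          rw [Nat.card_eq_fintype_card, Fintype.card_coe, Finset.card_insert_of_notMem hxS']
        omega
      have hinj := lift_injective_of_card b hcards t hgen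
      have hff := isFreeFactor_of_inj S x hxS t hty hinj
      have hff' : IsFreeFactor (Subgroup.closure (S : Set G)) B := by
        rw [hBc]; exact hff
      have hxB : x ∈ B := by
        rw [hBc]; exact Subgroup.subset_closure (by simp)
      have hmem := halg.2 x hxB (Subgroup.closure (S : Set G)) hff' (le_of_eq hS.symm)
      exact hx (hS ▸ hmem)

end Step

/-- E-algebraic extensions do not increase the rank. -/
theorem rank_le_of_eAlgebraicExt {G : Type*} [Group G] [IsFreeGroup G]
    (H K : Subgroup G) (hH : H.FG) (h : IsEAlgebraicExt H K) :
    grpRank K ≤ grpRank H := by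
  have h' : Relation.ReflTransGen
      (fun A B : Subgroup G => (∃ x : G, B = A ⊔ Subgroup.zpowers x) ∧ IsAlgebraicExt A B) H K := h
  clear h
  induction h' with
  | refl => exact le_rfl
  | tail hab hbc ih =>
    obtain ⟨⟨x, hx⟩, halg⟩ := hbc
    exact (step x hx halg).trans ih
end

section
/- Let F be a free group and 𝒫 an abstract property of subgroups of F. (i) If 𝒫 is intersection closed, then every subgroup H of F admits a 𝒫-closure. (ii) If 𝒫 is finite intersection closed and free factor closed, then every finitely generated subgroup H of F admits a 𝒫-closure. (iii) If every subgroup of F admits a 𝒫-closure and 𝒫 is free factor closed, then H ≤alg cl_𝒫(H) for every subgroup H of F; in particular, cl_𝒫(H) is finitely generated whenever H is. -/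
namespace TakMach

open Subgroup Function

variable {G : Type*} [Group G]

theorem isFreeFactor_le {L K : Subgroup G} (h : IsFreeFactor L K) : L ≤ K := by
  obtain ⟨L', _, hr⟩ := h
  intro x hx
  rw [← hr]
  exact ⟨Monoid.Coprod.inl ⟨x, hx⟩, by simp⟩

theorem freeFactor_of_basis {ι : Type*} (β : FreeGroup ι →* G) (hinj : Injective β)
    (K : Subgroup G) (hr : β.range = K) (s : Set ι) :
    IsFreeFactor (closure ((fun i => β (FreeGroup.of i)) '' s)) K := by
  classical
  set L := closure ((fun i => β (FreeGroup.of i)) '' s) with hL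
  set L' := closure ((fun i => β (FreeGroup.of i)) '' sᶜ) with hL'
  set τ : FreeGroup ι →* Monoid.Coprod L L' := FreeGroup.lift (fun i =>
    if h : i ∈ s then Monoid.Coprod.inl ⟨β (FreeGroup.of i), subset_closure ⟨i, h, rfl⟩⟩
    else Monoid.Coprod.inr ⟨β (FreeGroup.of i), subset_closure ⟨i, h, rfl⟩⟩) with hτ
  have hfτ : (Monoid.Coprod.lift L.subtype L'.subtype).comp τ = β := by
    ext i
    by_cases h : i ∈ s <;> simp [hτ, h]
  have hτsurj : Surjective τ := by
    intro m
    induction m using Monoid.Coprod.induction_on with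
    | inl m =>
      obtain ⟨g, hg⟩ := m
      revert hg
      have : ∀ (hg : g ∈ closure ((fun i => β (FreeGroup.of i)) '' s)),
          ∃ w, τ w = Monoid.Coprod.inl (⟨g, hg⟩ : L) := by
        intro hg
        induction hg using closure_induction with
        | mem x hx =>
          obtain ⟨i, hi, rfl⟩ := hx
          exact ⟨FreeGroup.of i, by simp [hτ, hi]⟩
        | one => exact ⟨1, by rw [map_one]; exact (map_one _).symm⟩
        | mul x y hx hy ihx ihy =>
          obtain ⟨w₁, hw₁⟩ := ihx
          obtain ⟨w₂, hw₂⟩ := ihy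
          exact ⟨w₁ * w₂, by rw [map_mul, hw₁, hw₂, ← map_mul]; rfl⟩
        | inv x hx ihx =>
          obtain ⟨w₁, hw₁⟩ := ihx
          exact ⟨w₁⁻¹, by rw [map_inv, hw₁, ← map_inv]; rfl⟩
      intro hg
      exact this hg
    | inr m =>
      obtain ⟨g, hg⟩ := m
      revert hg
      have : ∀ (hg : g ∈ closure ((fun i => β (FreeGroup.of i)) '' sᶜ)),
          ∃ w, τ w = Monoid.Coprod.inr (⟨g, hg⟩ : L') := by
        intro hg
        induction hg using closure_induction with
        | mem x hx =>
          obtain ⟨i, hi, rfl⟩ := hx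
          exact ⟨FreeGroup.of i, by simp only [hτ, FreeGroup.lift_apply_of]; exact dif_neg hi⟩
        | one => exact ⟨1, by rw [map_one]; exact (map_one _).symm⟩
        | mul x y hx hy ihx ihy =>
          obtain ⟨w₁, hw₁⟩ := ihx
          obtain ⟨w₂, hw₂⟩ := ihy
          exact ⟨w₁ * w₂, by rw [map_mul, hw₁, hw₂, ← map_mul]; rfl⟩
        | inv x hx ihx =>
          obtain ⟨w₁, hw₁⟩ := ihx
          exact ⟨w₁⁻¹, by rw [map_inv, hw₁, ← map_inv]; rfl⟩
      intro hg
      exact this hg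
    | mul x y ihx ihy =>
      obtain ⟨w₁, hw₁⟩ := ihx
      obtain ⟨w₂, hw₂⟩ := ihy
      exact ⟨w₁ * w₂, by rw [map_mul, hw₁, hw₂]⟩
  refine ⟨L', ?_, ?_⟩
  · intro a b hab
    obtain ⟨a', rfl⟩ := hτsurj a
    obtain ⟨b', rfl⟩ := hτsurj b
    have : β a' = β b' := by
      rw [← hfτ]
      exact hab
    rw [hinj this]
  · apply le_antisymm
    · rw [Monoid.Coprod.range_lift, Subgroup.range_subtype, Subgroup.range_subtype, ← hr]
      apply sup_le
      · exact hL ▸ closure_le _ |>.mpr (by rintro x ⟨i, -, rfl⟩; exact ⟨FreeGroup.of i, rfl⟩)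
      · exact hL' ▸ closure_le _ |>.mpr (by rintro x ⟨i, -, rfl⟩; exact ⟨FreeGroup.of i, rfl⟩)
    · intro x hx
      rw [← hr] at hx
      obtain ⟨w, rfl⟩ := hx
      exact ⟨τ w, by rw [← hfτ]; rfl⟩

end TakMach

namespace TakMach

open Subgroup Function

variable {G : Type*} [Group G] [IsFreeGroup G]

/-- Letters: generators with an orientation. -/
abbrev Ltr (G : Type*) [Group G] [IsFreeGroup G] := IsFreeGroup.Generators G × Bool

/-- The element of `G` associated to a letter. -/
noncomputable def elt (a : Ltr G) : G := cond a.2 (IsFreeGroup.of a.1) (IsFreeGroup.of a.1)⁻¹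

/-- Evaluation of a word. -/
noncomputable def wEval (l : List (Ltr G)) : G := (l.map elt).prod

@[simp] lemma wEval_nil : wEval ([] : List (Ltr G)) = 1 := rfl

@[simp] lemma wEval_cons (a : Ltr G) (l : List (Ltr G)) :
    wEval (a :: l) = elt a * wEval l := by simp [wEval]

lemma wEval_append (l l' : List (Ltr G)) : wEval (l ++ l') = wEval l * wEval l' := by
  simp [wEval]

lemma closure_range_of_eq_top :
    closure (Set.range (IsFreeGroup.of : IsFreeGroup.Generators G → G)) = ⊤ := by
  have h0 : (IsFreeGroup.of : IsFreeGroup.Generators G → G)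
      = ⇑(IsFreeGroup.mulEquiv G).toMonoidHom ∘ FreeGroup.of := by
    funext a
    simp [IsFreeGroup.of]
  rw [h0, Set.range_comp, ← MonoidHom.map_closure (IsFreeGroup.mulEquiv G).toMonoidHom,
    FreeGroup.closure_range_of]
  have hs : Surjective (IsFreeGroup.mulEquiv G).toMonoidHom := (IsFreeGroup.mulEquiv G).surjective
  rw [← MonoidHom.range_eq_map, MonoidHom.range_eq_top.mpr hs]

lemma wEval_flip (l : List (Ltr G)) :
    wEval (l.reverse.map (fun a => (a.1, !a.2))) = (wEval l)⁻¹ := by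
  induction l with
  | nil => simp
  | cons a l ih =>
    rw [List.reverse_cons, List.map_append, wEval_append, ih, wEval_cons]
    have : wEval ([((a.1 : IsFreeGroup.Generators G), !a.2)]) = (elt a)⁻¹ := by
      rcases a with ⟨x, b⟩
      cases b <;> simp [wEval, elt]
    simp only [List.map_cons, List.map_nil] at this ⊢
    rw [this, mul_inv_rev]

lemma exists_word (g : G) : ∃ l : List (Ltr G), wEval l = g := by
  have hg : g ∈ closure (Set.range (IsFreeGroup.of : IsFreeGroup.Generators G → G)) := by
    rw [closure_range_of_eq_top]; trivial
  induction hg using closure_induction with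
  | mem x hx =>
    obtain ⟨a, rfl⟩ := hx
    exact ⟨[(a, true)], by simp [elt]⟩
  | one => exact ⟨[], rfl⟩
  | mul x y hx hy ihx ihy =>
    obtain ⟨l, rfl⟩ := ihx
    obtain ⟨l', rfl⟩ := ihy
    exact ⟨l ++ l', wEval_append l l'⟩
  | inv x hx ihx =>
    obtain ⟨l, rfl⟩ := ihx
    exact ⟨l.reverse.map (fun a => (a.1, !a.2)), wEval_flip l⟩

/-- The base point of the coset space. -/
def bp (K : Subgroup G) : G ⧸ K := ((1 : G) : G ⧸ K)

/-- The endpoint in the coset space of the path reading a word from the base point. -/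
noncomputable def ep (K : Subgroup G) (l : List (Ltr G)) : G ⧸ K := wEval l • bp K

lemma smul_base (K : Subgroup G) (g : G) : g • bp K = (g : G ⧸ K) := by
  rw [bp, MulAction.Quotient.smul_mk, smul_eq_mul, mul_one]

lemma mk_eq_bp_iff (K : Subgroup G) (g : G) : (g : G ⧸ K) = bp K ↔ g ∈ K := by
  rw [bp, QuotientGroup.eq]
  simp

@[simp] lemma ep_nil (K : Subgroup G) : ep K ([] : List (Ltr G)) = bp K := by
  simp [ep]

lemma ep_cons (K : Subgroup G) (a : Ltr G) (l : List (Ltr G)) :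
    ep K (a :: l) = elt a • ep K l := by
  rw [ep, ep, wEval_cons, mul_smul]

/-- A partial tree in the Schreier graph of `K`. -/
structure IsPT (K : Subgroup G) (T : Set (List (Ltr G))) : Prop where
  nil : [] ∈ T
  tail : ∀ a l, a :: l ∈ T → l ∈ T
  inj : ∀ l ∈ T, ∀ l' ∈ T, ep K l = ep K l' → l = l'

lemma IsPT.insert' {K : Subgroup G} {T : Set (List (Ltr G))} (hpt : IsPT K T)
    (a : Ltr G) (l' : List (Ltr G)) (hl' : l' ∈ T)
    (hnew : ∀ l ∈ T, ep K l ≠ ep K (a :: l')) : IsPT K (insert (a :: l') T) where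
  nil := Set.mem_insert_iff.mpr (Or.inr hpt.nil)
  tail := by
    intro b l hbl
    rcases Set.mem_insert_iff.mp hbl with h | h
    · have : l = l' := (List.cons.injEq _ _ _ _ ▸ h).2
      exact Set.mem_insert_iff.mpr (Or.inr (this ▸ hl'))
    · exact Set.mem_insert_iff.mpr (Or.inr (hpt.tail b l h))
  inj := by
    intro l₁ h₁ l₂ h₂ hep
    rcases Set.mem_insert_iff.mp h₁ with h₁' | h₁' <;>
      rcases Set.mem_insert_iff.mp h₂ with h₂' | h₂'
    · rw [h₁', h₂']
    · exact absurd (h₁' ▸ hep).symm (hnew l₂ h₂')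
    · exact absurd (h₂' ▸ hep) (hnew l₁ h₁')
    · exact hpt.inj l₁ h₁' l₂ h₂' hep

lemma exists_maximal_tree (K : Subgroup G) (T₀ : Set (List (Ltr G))) (h₀ : IsPT K T₀) :
    ∃ T, T₀ ⊆ T ∧ IsPT K T ∧ ∀ v : G ⧸ K, ∃ l ∈ T, ep K l = v := by
  have hchainub : ∀ c ⊆ {T | IsPT K T ∧ T₀ ⊆ T}, IsChain (· ⊆ ·) c → c.Nonempty →
      ∃ ub ∈ {T | IsPT K T ∧ T₀ ⊆ T}, ∀ s ∈ c, s ⊆ ub := by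
    intro c hcS hchain hcne
    obtain ⟨t₀, ht₀⟩ := hcne
    refine ⟨⋃₀ c, ⟨⟨?_, ?_, ?_⟩, ?_⟩, fun s hs => Set.subset_sUnion_of_mem hs⟩
    · exact ⟨t₀, ht₀, (hcS ht₀).1.nil⟩
    · rintro a l ⟨t, ht, hal⟩
      exact ⟨t, ht, (hcS ht).1.tail a l hal⟩
    · rintro l ⟨t₁, ht₁, hl₁⟩ l' ⟨t₂, ht₂, hl₂⟩ hep
      rcases hchain.total ht₁ ht₂ with h | h
      · exact (hcS ht₂).1.inj l (h hl₁) l' hl₂ hep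
      · exact (hcS ht₁).1.inj l hl₁ l' (h hl₂) hep
    · exact (hcS ht₀).2.trans (Set.subset_sUnion_of_mem ht₀)
  obtain ⟨T, hT₀T, hmax⟩ := zorn_subset_nonempty {T | IsPT K T ∧ T₀ ⊆ T} hchainub T₀ ⟨h₀, subset_rfl⟩
  obtain ⟨⟨hT, -⟩, hmax'⟩ := hmax
  refine ⟨T, hT₀T, hT, ?_⟩
  have step : ∀ l ∈ T, ∀ a : Ltr G, ∃ l' ∈ T, ep K l' = ep K (a :: l) := by
    intro l hl a
    by_contra hcon
    push_neg at hcon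
    have hni : (a :: l) ∉ T := fun h => hcon _ h rfl
    have hS : insert (a :: l) T ∈ {T | IsPT K T ∧ T₀ ⊆ T} := by
      refine ⟨hT.insert' a l hl (fun l' hl' => hcon l' hl'), hT₀T.trans (Set.subset_insert _ _)⟩
    have := hmax' hS (Set.subset_insert _ _)
    exact hni (this (Set.mem_insert _ _))
  have cover : ∀ lw : List (Ltr G), ∃ l ∈ T, ep K l = ep K lw := by
    intro lw
    induction lw with
    | nil => exact ⟨[], hT.nil, rfl⟩
    | cons a lw ih =>
      obtain ⟨l, hl, hep⟩ := ih
      obtain ⟨l', hl', hep'⟩ := step l hl a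
      exact ⟨l', hl', by rw [hep', ep_cons, ep_cons, hep]⟩
  intro v
  obtain ⟨g, rfl⟩ := QuotientGroup.mk_surjective v
  obtain ⟨lw, hlw⟩ := exists_word g
  obtain ⟨l, hl, hep⟩ := cover lw
  exact ⟨l, hl, by rw [hep, ep, hlw, smul_base]⟩

end TakMach

namespace TakMach

open Subgroup Function

variable {G : Type*} [Group G] [IsFreeGroup G]
variable {K : Subgroup G} {T : Set (List (Ltr G))}

/-- The chosen word of the spanning tree reaching a given vertex. -/
noncomputable def rep (hcov : ∀ v : G ⧸ K, ∃ l ∈ T, ep K l = v) (v : G ⧸ K) :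
    List (Ltr G) := (hcov v).choose

lemma rep_mem (hcov : ∀ v : G ⧸ K, ∃ l ∈ T, ep K l = v) (v : G ⧸ K) :
    rep hcov v ∈ T := (hcov v).choose_spec.1

lemma rep_ep (hcov : ∀ v : G ⧸ K, ∃ l ∈ T, ep K l = v) (v : G ⧸ K) :
    ep K (rep hcov v) = v := (hcov v).choose_spec.2

lemma rep_uniq (hT : IsPT K T) (hcov : ∀ v : G ⧸ K, ∃ l ∈ T, ep K l = v)
    {l : List (Ltr G)} (hl : l ∈ T) : rep hcov (ep K l) = l :=
  hT.inj _ (rep_mem hcov _) _ hl (rep_ep hcov _)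

/-- The tree-transversal representative of a vertex. -/
noncomputable def pfun (hcov : ∀ v : G ⧸ K, ∃ l ∈ T, ep K l = v) (v : G ⧸ K) : G :=
  wEval (rep hcov v)

lemma pfun_smul (hcov : ∀ v : G ⧸ K, ∃ l ∈ T, ep K l = v) (v : G ⧸ K) :
    pfun hcov v • bp K = v := rep_ep hcov v

lemma pfun_base (hT : IsPT K T) (hcov : ∀ v : G ⧸ K, ∃ l ∈ T, ep K l = v) :
    pfun hcov (bp K) = 1 := by
  have h1 : ep K ([] : List (Ltr G)) = bp K := ep_nil K
  have h2 := rep_uniq hT hcov hT.nil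
  rw [pfun, ← h1, h2, wEval_nil]

/-- Schreier generators. -/
noncomputable def gE (hcov : ∀ v : G ⧸ K, ∃ l ∈ T, ep K l = v)
    (x : IsFreeGroup.Generators G) (v : G ⧸ K) : G :=
  (pfun hcov (IsFreeGroup.of x • v))⁻¹ * IsFreeGroup.of x * pfun hcov v

lemma gE_mem (hcov : ∀ v : G ⧸ K, ∃ l ∈ T, ep K l = v)
    (x : IsFreeGroup.Generators G) (v : G ⧸ K) : gE hcov x v ∈ K := by
  rw [← mk_eq_bp_iff, ← smul_base]
  rw [gE, mul_smul, mul_smul, pfun_smul, inv_smul_eq_iff, pfun_smul]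

/-- The index for the basis of `K`: non-tree edges. -/
abbrev Idx (hcov : ∀ v : G ⧸ K, ∃ l ∈ T, ep K l = v) : Type _ :=
  {e : IsFreeGroup.Generators G × (G ⧸ K) // gE hcov e.1 e.2 ≠ 1}

open Classical in
/-- Edge labels in the free group on non-tree edges. -/
noncomputable def cF (hcov : ∀ v : G ⧸ K, ∃ l ∈ T, ep K l = v)
    (x : IsFreeGroup.Generators G) (v : G ⧸ K) : FreeGroup (Idx hcov) :=
  if h : gE hcov x v = 1 then 1 else FreeGroup.of ⟨(x, v), h⟩

/-- The permutation action of a generator on states. -/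
noncomputable def sig (hcov : ∀ v : G ⧸ K, ∃ l ∈ T, ep K l = v)
    (x : IsFreeGroup.Generators G) :
    Equiv.Perm ((G ⧸ K) × FreeGroup (Idx hcov)) where
  toFun s := (IsFreeGroup.of x • s.1, cF hcov x s.1 * s.2)
  invFun s := ((IsFreeGroup.of x)⁻¹ • s.1, (cF hcov x ((IsFreeGroup.of x)⁻¹ • s.1))⁻¹ * s.2)
  left_inv := by
    rintro ⟨v, u⟩
    simp [inv_smul_smul, inv_mul_cancel_left]
  right_inv := by
    rintro ⟨v, u⟩
    simp [smul_inv_smul, mul_inv_cancel_left]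

lemma sig_apply (hcov : ∀ v : G ⧸ K, ∃ l ∈ T, ep K l = v) (x : IsFreeGroup.Generators G)
    (s : (G ⧸ K) × FreeGroup (Idx hcov)) :
    sig hcov x s = (IsFreeGroup.of x • s.1, cF hcov x s.1 * s.2) := rfl

/-- The action homomorphism. -/
noncomputable def phi (hcov : ∀ v : G ⧸ K, ∃ l ∈ T, ep K l = v) :
    G →* Equiv.Perm ((G ⧸ K) × FreeGroup (Idx hcov)) :=
  IsFreeGroup.lift (sig hcov)

lemma phi_of (hcov : ∀ v : G ⧸ K, ∃ l ∈ T, ep K l = v) (x : IsFreeGroup.Generators G) :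
    phi hcov (IsFreeGroup.of x) = sig hcov x := IsFreeGroup.lift_of _ _

lemma phi_snd (hcov : ∀ v : G ⧸ K, ∃ l ∈ T, ep K l = v) (w : G) :
    ∀ v u u', phi hcov w (v, u * u') = ((phi hcov w (v, u)).1, (phi hcov w (v, u)).2 * u') := by
  have hw : w ∈ closure (Set.range (IsFreeGroup.of : IsFreeGroup.Generators G → G)) := by
    rw [closure_range_of_eq_top]; trivial
  induction hw using closure_induction with
  | mem g hg =>
    obtain ⟨x, rfl⟩ := hg
    intro v u u'
    rw [phi_of, sig_apply, sig_apply]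
    simp [mul_assoc]
  | one =>
    intro v u u'
    simp
  | mul x y hx hy ihx ihy =>
    intro v u u'
    rw [map_mul, Equiv.Perm.mul_apply, ihy]
    have := ihx (phi hcov y (v, u)).1 (phi hcov y (v, u)).2 u'
    rw [this, Equiv.Perm.mul_apply]
  | inv x hx ihx =>
    intro v u u'
    apply (phi hcov x).injective
    have h1 : ∀ s, phi hcov x (phi hcov x⁻¹ s) = s := by
      intro s
      rw [← Equiv.Perm.mul_apply, ← map_mul, mul_inv_cancel, map_one, Equiv.Perm.one_apply]
    rw [h1]
    have := ihx (phi hcov x⁻¹ (v, u)).1 (phi hcov x⁻¹ (v, u)).2 u'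
    rw [this, h1]

lemma phi_fst (hcov : ∀ v : G ⧸ K, ∃ l ∈ T, ep K l = v) (w : G) :
    ∀ v u, (phi hcov w (v, u)).1 = w • v := by
  have hw : w ∈ closure (Set.range (IsFreeGroup.of : IsFreeGroup.Generators G → G)) := by
    rw [closure_range_of_eq_top]; trivial
  induction hw using closure_induction with
  | mem g hg =>
    obtain ⟨x, rfl⟩ := hg
    intro v u
    rw [phi_of, sig_apply]
  | one =>
    intro v u
    simp
  | mul x y hx hy ihx ihy =>
    intro v u
    rw [map_mul, Equiv.Perm.mul_apply]
    have := ihx (phi hcov y (v, u)).1 (phi hcov y (v, u)).2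
    rw [Prod.mk.eta] at this
    rw [this, ihy, mul_smul]
  | inv x hx ihx =>
    intro v u
    have h1 : phi hcov x (phi hcov x⁻¹ (v, u)) = (v, u) := by
      rw [← Equiv.Perm.mul_apply, ← map_mul, mul_inv_cancel, map_one, Equiv.Perm.one_apply]
    have h2 := ihx (phi hcov x⁻¹ (v, u)).1 (phi hcov x⁻¹ (v, u)).2
    rw [Prod.mk.eta] at h2
    rw [h1] at h2
    have h3 : x • (phi hcov x⁻¹ (v, u)).1 = v := h2.symm
    exact (inv_smul_eq_iff.mpr h3.symm).symm

/-- The cocycle. -/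
noncomputable def rho (hcov : ∀ v : G ⧸ K, ∃ l ∈ T, ep K l = v) (w : G) (v : G ⧸ K) :
    FreeGroup (Idx hcov) := (phi hcov w (v, 1)).2

lemma phi_spec (hcov : ∀ v : G ⧸ K, ∃ l ∈ T, ep K l = v) (w : G) (v : G ⧸ K)
    (u : FreeGroup (Idx hcov)) : phi hcov w (v, u) = (w • v, rho hcov w v * u) := by
  have h1 : phi hcov w (v, u) = phi hcov w (v, 1 * u) := by rw [one_mul]
  rw [h1, phi_snd hcov w v 1 u, rho, phi_fst hcov w v 1]

lemma rho_one (hcov : ∀ v : G ⧸ K, ∃ l ∈ T, ep K l = v) (v : G ⧸ K) :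
    rho hcov 1 v = 1 := by
  rw [rho, map_one, Equiv.Perm.one_apply]

lemma rho_cocycle (hcov : ∀ v : G ⧸ K, ∃ l ∈ T, ep K l = v) (w w' : G) (v : G ⧸ K) :
    rho hcov (w * w') v = rho hcov w (w' • v) * rho hcov w' v := by
  have : phi hcov (w * w') (v, 1) = phi hcov w (phi hcov w' (v, 1)) := by
    rw [map_mul, Equiv.Perm.mul_apply]
  rw [rho, this, phi_spec hcov w', phi_spec hcov w, mul_one]

lemma rho_of (hcov : ∀ v : G ⧸ K, ∃ l ∈ T, ep K l = v) (x : IsFreeGroup.Generators G)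
    (v : G ⧸ K) : rho hcov (IsFreeGroup.of x) v = cF hcov x v := by
  rw [rho, phi_of]
  show cF hcov x v * 1 = _
  rw [mul_one]

lemma rho_inv (hcov : ∀ v : G ⧸ K, ∃ l ∈ T, ep K l = v) (w : G) (v : G ⧸ K) :
    rho hcov w⁻¹ v = (rho hcov w (w⁻¹ • v))⁻¹ := by
  have h1 : rho hcov w (w⁻¹ • v) * rho hcov w⁻¹ v = 1 := by
    rw [← rho_cocycle, mul_inv_cancel, rho_one]
  exact (inv_eq_of_mul_eq_one_right h1).symm

end TakMach

namespace TakMach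

open Subgroup Function

variable {G : Type*} [Group G] [IsFreeGroup G]
variable {K : Subgroup G} {T : Set (List (Ltr G))}

lemma elt_true (x : IsFreeGroup.Generators G) : elt ((x, true) : Ltr G) = IsFreeGroup.of x := rfl
lemma elt_false (x : IsFreeGroup.Generators G) :
    elt ((x, false) : Ltr G) = (IsFreeGroup.of x)⁻¹ := rfl

lemma rho_p (hT : IsPT K T) (hcov : ∀ v : G ⧸ K, ∃ l ∈ T, ep K l = v) :
    ∀ v, rho hcov (pfun hcov v) (bp K) = 1 := by
  suffices h : ∀ n (v : G ⧸ K), (rep hcov v).length = n →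
      rho hcov (pfun hcov v) (bp K) = 1 by
    intro v; exact h _ v rfl
  intro n
  induction n using Nat.strong_induction_on with
  | _ n ih =>
    intro v hn
    rcases hrep : rep hcov v with _ | ⟨a, l⟩
    · have hp1 : pfun hcov v = 1 := by rw [pfun, hrep, wEval_nil]
      rw [hp1, rho_one]
    · have hlT : l ∈ T := hT.tail a l (hrep ▸ rep_mem hcov v)
      have hrepl : rep hcov (ep K l) = l := rep_uniq hT hcov hlT
      have hp : pfun hcov v = elt a * pfun hcov (ep K l) := by
        rw [pfun, hrep, wEval_cons, pfun, hrepl]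
      have hv : v = elt a • ep K l := by
        conv_lhs => rw [← rep_ep hcov v, hrep, ep_cons]
      have ihl : rho hcov (pfun hcov (ep K l)) (bp K) = 1 := by
        refine ih l.length ?_ (ep K l) (by rw [hrepl])
        rw [← hn, hrep]
        simp
      rw [hp, rho_cocycle]
      have hsm : pfun hcov (ep K l) • bp K = ep K l := pfun_smul hcov _
      rw [ihl, mul_one, hsm]
      rcases a with ⟨x, b⟩
      cases b
      · rw [elt_false] at hv ⊢
        rw [rho_inv]
        have hxv : IsFreeGroup.of x • v = ep K l := by rw [hv, smul_inv_smul]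
        have hgE : gE hcov x ((IsFreeGroup.of x)⁻¹ • ep K l) = 1 := by
          rw [← hv, gE, hxv, hp, elt_false]
          group
        rw [rho_of, cF, dif_pos hgE, inv_one]
      · rw [elt_true] at hv ⊢
        have hgE : gE hcov x (ep K l) = 1 := by
          rw [gE, ← hv, hp, elt_true]
          group
        rw [rho_of, cF, dif_pos hgE]

/-- The candidate basis map. -/
noncomputable def theta (hcov : ∀ v : G ⧸ K, ∃ l ∈ T, ep K l = v) :
    FreeGroup (Idx hcov) →* G :=
  FreeGroup.lift (fun e => gE hcov e.1.1 e.1.2)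

lemma theta_of (hcov : ∀ v : G ⧸ K, ∃ l ∈ T, ep K l = v) (e : Idx hcov) :
    theta hcov (FreeGroup.of e) = gE hcov e.1.1 e.1.2 := FreeGroup.lift_apply_of

lemma theta_mem (hcov : ∀ v : G ⧸ K, ∃ l ∈ T, ep K l = v) (w : FreeGroup (Idx hcov)) :
    theta hcov w ∈ K := by
  have : (theta hcov).range ≤ K := by
    rw [theta, FreeGroup.range_lift_eq_closure]
    refine (closure_le _).mpr ?_
    rintro g ⟨e, rfl⟩
    exact gE_mem hcov _ _
  exact this ⟨w, rfl⟩

lemma rho_theta (hT : IsPT K T) (hcov : ∀ v : G ⧸ K, ∃ l ∈ T, ep K l = v) (e : Idx hcov) :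
    rho hcov (gE hcov e.1.1 e.1.2) (bp K) = FreeGroup.of e := by
  obtain ⟨⟨x, v⟩, hne⟩ := e
  show rho hcov (gE hcov x v) (bp K) = _
  rw [gE, rho_cocycle, rho_cocycle, pfun_smul, rho_p hT hcov, mul_one, rho_of]
  rw [rho_inv]
  have h2 : (pfun hcov (IsFreeGroup.of x • v))⁻¹ • (IsFreeGroup.of x • v) = bp K := by
    rw [inv_smul_eq_iff, pfun_smul]
  rw [h2, rho_p hT hcov, inv_one, one_mul, cF, dif_neg hne]

/-- `rho` at the base point as a homomorphism on `K`. -/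
noncomputable def Rhom (hcov : ∀ v : G ⧸ K, ∃ l ∈ T, ep K l = v) :
    K →* FreeGroup (Idx hcov) where
  toFun k := rho hcov (k : G) (bp K)
  map_one' := rho_one hcov (bp K)
  map_mul' a b := by
    show rho hcov ((a : G) * (b : G)) (bp K) = _
    rw [rho_cocycle]
    have : (b : G) • bp K = bp K := by rw [smul_base, mk_eq_bp_iff]; exact b.2
    rw [this]

lemma theta_inj (hT : IsPT K T) (hcov : ∀ v : G ⧸ K, ∃ l ∈ T, ep K l = v) :
    Injective (theta hcov) := by
  have key : ∀ w, rho hcov (theta hcov w) (bp K) = w := by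
    have hcomp : (Rhom hcov).comp ((theta hcov).codRestrict K (theta_mem hcov))
        = MonoidHom.id _ := by
      apply FreeGroup.ext_hom
      intro e
      show rho hcov (theta hcov (FreeGroup.of e)) (bp K) = FreeGroup.of e
      rw [theta_of]
      exact rho_theta hT hcov e
    intro w
    exact congrArg (fun f => f w) hcomp
  intro a b hab
  rw [← key a, ← key b, hab]

lemma p_conj (hcov : ∀ v : G ⧸ K, ∃ l ∈ T, ep K l = v) (w : G) :
    ∀ v, w * pfun hcov v = pfun hcov (w • v) * theta hcov (rho hcov w v) := by
  have hw : w ∈ closure (Set.range (IsFreeGroup.of : IsFreeGroup.Generators G → G)) := by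
    rw [closure_range_of_eq_top]; trivial
  induction hw using closure_induction with
  | mem g hg =>
    obtain ⟨x, rfl⟩ := hg
    intro v
    rw [rho_of]
    by_cases h : gE hcov x v = 1
    · rw [cF, dif_pos h, map_one, mul_one]
      have h2 : (pfun hcov (IsFreeGroup.of x • v))⁻¹ * (IsFreeGroup.of x * pfun hcov v) = 1 := by
        rw [← mul_assoc]
        exact h
      exact (inv_mul_eq_one.mp h2).symm
    · rw [cF, dif_neg h, theta_of]
      show _ = pfun hcov (IsFreeGroup.of x • v) * gE hcov x v
      rw [gE]
      group
  | one =>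
    intro v
    rw [one_mul, one_smul, rho_one, map_one, mul_one]
  | mul x y hx hy ihx ihy =>
    intro v
    rw [mul_assoc, ihy, ← mul_assoc, ihx, rho_cocycle, map_mul, mul_smul, mul_assoc]
  | inv x hx ihx =>
    intro v
    have h1 := ihx (x⁻¹ • v)
    rw [smul_inv_smul] at h1
    have h2 : pfun hcov (x⁻¹ • v)
        = x⁻¹ * (pfun hcov v * theta hcov (rho hcov x (x⁻¹ • v))) := by
      rw [← h1, inv_mul_cancel_left]
    rw [h2, rho_inv, map_inv]
    group

lemma theta_range (hT : IsPT K T) (hcov : ∀ v : G ⧸ K, ∃ l ∈ T, ep K l = v) :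
    (theta hcov).range = K := by
  apply le_antisymm
  · rintro g ⟨w, rfl⟩
    exact theta_mem hcov w
  · intro w hw
    have h1 := p_conj hcov w (bp K)
    have h2 : w • bp K = bp K := by rw [smul_base, mk_eq_bp_iff]; exact hw
    rw [pfun_base hT hcov, h2, pfun_base hT hcov, mul_one, one_mul] at h1
    exact ⟨rho hcov w (bp K), h1.symm⟩

theorem freeFactor_of_subset (hT : IsPT K T) (hcov : ∀ v : G ⧸ K, ∃ l ∈ T, ep K l = v)
    (A : Set (Idx hcov)) :
    IsFreeFactor (closure ((fun e : Idx hcov => gE hcov e.1.1 e.1.2) '' A)) K := by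
  have h := freeFactor_of_basis (theta hcov) (theta_inj hT hcov) K (theta_range hT hcov) A
  have heq : (fun i : Idx hcov => theta hcov (FreeGroup.of i))
      = fun e : Idx hcov => gE hcov e.1.1 e.1.2 := funext fun e => theta_of hcov e
  rwa [heq] at h

end TakMach

namespace TakMach

open Subgroup Function

variable {G : Type*} [Group G] [IsFreeGroup G]

lemma extend_tree_word (K : Subgroup G) (T₀ : Set (List (Ltr G))) (h₀ : IsPT K T₀)
    (hfin : T₀.Finite) (m : ℕ) (Λ : Set (Ltr G))
    (hb : ∀ l ∈ T₀, l.length ≤ m ∧ ∀ a ∈ l, a ∈ Λ)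
    (w : List (Ltr G)) (hw : ∀ a ∈ w, a ∈ Λ) :
    ∃ T₁, T₀ ⊆ T₁ ∧ IsPT K T₁ ∧ T₁.Finite ∧
      (∀ l ∈ T₁, l.length ≤ m + w.length ∧ ∀ a ∈ l, a ∈ Λ) ∧
      (∀ s, s <:+ w → ∃ l ∈ T₁, ep K l = ep K s) := by
  induction w with
  | nil =>
    refine ⟨T₀, subset_rfl, h₀, hfin, fun l hl => (by simpa using hb l hl), fun s hs => ?_⟩
    rw [List.suffix_nil.mp hs]
    exact ⟨[], h₀.nil, rfl⟩
  | cons a w ih =>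
    obtain ⟨T₁, hsub, hpt, hfin₁, hb₁, hcov₁⟩ := ih (fun a' ha' => hw a' (List.mem_cons_of_mem _ ha'))
    by_cases hc : ∃ l ∈ T₁, ep K l = ep K (a :: w)
    · refine ⟨T₁, hsub, hpt, hfin₁,
        fun l hl => ⟨le_trans (hb₁ l hl).1 (by simp), (hb₁ l hl).2⟩, fun s hs => ?_⟩
      rcases List.suffix_cons_iff.mp hs with h | h
      · rw [h]; exact hc
      · exact hcov₁ s h
    · push_neg at hc
      obtain ⟨l', hl', hep'⟩ := hcov₁ w List.suffix_rfl
      have hepnew : ep K (a :: l') = ep K (a :: w) := by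
        rw [ep_cons, ep_cons, hep']
      refine ⟨insert (a :: l') T₁, hsub.trans (Set.subset_insert _ _),
        hpt.insert' a l' hl' (fun l hl => by rw [hepnew]; exact hc l hl),
        hfin₁.insert _, ?_, ?_⟩
      · intro l hl
        rcases Set.mem_insert_iff.mp hl with h | h
        · constructor
          · rw [h]
            have := (hb₁ l' hl').1
            simp only [List.length_cons]
            omega
          · intro b hb'
            rcases List.mem_cons.mp (h ▸ hb') with h2 | h2
            · exact h2 ▸ hw a (List.mem_cons_self)
            · exact (hb₁ l' hl').2 b h2
        · exact ⟨le_trans (hb₁ l h).1 (by simp), (hb₁ l h).2⟩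
      · intro s hs
        rcases List.suffix_cons_iff.mp hs with h | h
        · exact ⟨a :: l', Set.mem_insert _ _, by rw [hepnew, h]⟩
        · obtain ⟨l, hl, hep⟩ := hcov₁ s h
          exact ⟨l, Set.mem_insert_iff.mpr (Or.inr hl), hep⟩

lemma exists_initial_tree (K : Subgroup G) (wl : List (List (Ltr G))) (Λ : Set (Ltr G))
    (hwl : ∀ w ∈ wl, ∀ a ∈ w, a ∈ Λ) :
    ∃ T₀, IsPT K T₀ ∧ T₀.Finite ∧
      (∀ l ∈ T₀, l.length ≤ (wl.map List.length).sum ∧ ∀ a ∈ l, a ∈ Λ) ∧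
      (∀ w ∈ wl, ∀ s, s <:+ w → ∃ l ∈ T₀, ep K l = ep K s) := by
  induction wl with
  | nil =>
    refine ⟨{[]}, ⟨rfl, ?_, ?_⟩, Set.finite_singleton _, ?_, by simp⟩
    · intro a l hal
      exact absurd hal (by simp)
    · intro l hl l' hl' _
      rw [Set.mem_singleton_iff.mp hl, Set.mem_singleton_iff.mp hl']
    · intro l hl
      rw [Set.mem_singleton_iff.mp hl]
      exact ⟨by simp, by simp⟩
  | cons w wl ih =>
    obtain ⟨T₀, hpt, hfin, hb, hcovold⟩ := ih (fun w' hw' => hwl w' (List.mem_cons_of_mem _ hw'))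
    obtain ⟨T₁, hsub, hpt₁, hfin₁, hb₁, hcov₁⟩ := extend_tree_word K T₀ hpt hfin
      ((wl.map List.length).sum) Λ hb w (hwl w (List.mem_cons_self))
    refine ⟨T₁, hpt₁, hfin₁, ?_, ?_⟩
    · intro l hl
      refine ⟨le_trans (hb₁ l hl).1 (by simp; omega), (hb₁ l hl).2⟩
    · intro w' hw' s hs
      rcases List.mem_cons.mp hw' with h | h
      · exact hcov₁ s (h ▸ hs)
      · obtain ⟨l, hl, hep⟩ := hcovold w' h s hs
        exact ⟨l, hsub hl, hep⟩

lemma finite_bounded_lists {Λ : Set (Ltr G)} (hΛ : Λ.Finite) (N : ℕ) :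
    {l : List (Ltr G) | l.length ≤ N ∧ ∀ a ∈ l, a ∈ Λ}.Finite := by
  have : Finite ↑Λ := hΛ
  have h1 : {l : List ↑Λ | l.length ≤ N}.Finite := List.finite_length_le ↑Λ N
  have h2 := h1.image (fun l : List ↑Λ => l.map Subtype.val)
  apply h2.subset
  rintro l ⟨hlen, hmem⟩
  refine ⟨l.attach.map (fun x => (⟨x.1, hmem x.1 x.2⟩ : ↑Λ)), ?_, ?_⟩
  · simpa using hlen
  · simp [List.map_map, Function.comp_def]
    exact List.attach_map_subtype_val l

theorem takahasi_fg (H : Subgroup G) (hH : H.FG) :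
    ∃ 𝓛 : Set (Subgroup G), 𝓛.Finite ∧ (∀ L ∈ 𝓛, H ≤ L ∧ L.FG) ∧
      ∀ K : Subgroup G, H ≤ K → ∃ L ∈ 𝓛, IsFreeFactor L K := by
  classical
  obtain ⟨Sg, hSgclos, hSgfin⟩ := (Subgroup.fg_iff H).mp hH
  choose word hword using (exists_word (G := G))
  set wl : List (List (Ltr G)) := hSgfin.toFinset.toList.map word with hwl
  have hmemwl : ∀ g ∈ Sg, word g ∈ wl := by
    intro g hg
    exact List.mem_map_of_mem (f := word) (by
      rw [Finset.mem_toList, Set.Finite.mem_toFinset]; exact hg)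
  set Λ : Set (Ltr G) := {a | ∃ w ∈ wl, a ∈ w} with hΛdef
  have hΛ : Λ.Finite := by
    have heq : Λ = {a | a ∈ wl.flatten} := by
      ext a; simp [hΛdef, List.mem_flatten]
    rw [heq]
    exact wl.flatten.finite_toSet
  have hwlΛ : ∀ w ∈ wl, ∀ a ∈ w, a ∈ Λ := fun w hw a ha => ⟨w, hw, ha⟩
  set N : ℕ := (wl.map List.length).sum with hN
  set 𝒰 : Set (List (Ltr G)) := {l | l.length ≤ N ∧ ∀ a ∈ l, a ∈ Λ} with h𝒰def
  have h𝒰 : 𝒰.Finite := finite_bounded_lists hΛ N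
  set 𝒢 : Set G := (fun t : List (Ltr G) × List (Ltr G) × Ltr G =>
    (wEval t.1)⁻¹ * elt t.2.2 * wEval t.2.1) '' (𝒰 ×ˢ (𝒰 ×ˢ Λ)) with h𝒢def
  have h𝒢 : 𝒢.Finite := (h𝒰.prod (h𝒰.prod hΛ)).image _
  set 𝓛 : Set (Subgroup G) := {L | H ≤ L ∧ ∃ F : Set G, F ⊆ 𝒢 ∧ L = closure F} with h𝓛def
  have h𝓛fin : 𝓛.Finite := by
    apply Set.Finite.subset ((h𝒢.finite_subsets).image Subgroup.closure)
    rintro L ⟨-, F, hF, rfl⟩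
    exact ⟨F, hF, rfl⟩
  refine ⟨𝓛, h𝓛fin, ?_, ?_⟩
  · rintro L ⟨hHL, F, hF, rfl⟩
    exact ⟨hHL, (Subgroup.fg_iff _).mpr ⟨F, rfl, h𝒢.subset hF⟩⟩
  intro K hHK
  obtain ⟨T₀, hpt₀, hfin₀, hb₀, hcov₀⟩ := exists_initial_tree K wl Λ hwlΛ
  obtain ⟨T, hT₀T, hT, hcov⟩ := exists_maximal_tree K T₀ hpt₀
  have hrep₀ : ∀ {l₀ : List (Ltr G)}, l₀ ∈ T₀ → ∀ {s : List (Ltr G)},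
      ep K l₀ = ep K s → rep hcov (ep K s) = l₀ := by
    intro l₀ hl₀ s h
    rw [← h]
    exact rep_uniq hT hcov (hT₀T hl₀)
  set F : Set G := {g | ∃ w ∈ wl, ∃ a s, (a :: s) <:+ w ∧
    g = (pfun hcov (ep K (a :: s)))⁻¹ * elt a * pfun hcov (ep K s)} with hFdef
  have hF𝒢 : F ⊆ 𝒢 := by
    rintro g ⟨w, hw, a, s, hsfx, rfl⟩
    have hs : s <:+ w := (List.suffix_cons a s).trans hsfx
    obtain ⟨l₁, hl₁, hep₁⟩ := hcov₀ w hw (a :: s) hsfx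
    obtain ⟨l₂, hl₂, hep₂⟩ := hcov₀ w hw s hs
    have hr₁ : rep hcov (ep K (a :: s)) = l₁ := hrep₀ hl₁ hep₁
    have hr₂ : rep hcov (ep K s) = l₂ := hrep₀ hl₂ hep₂
    refine ⟨(l₁, l₂, a), ⟨⟨(hb₀ l₁ hl₁).1, (hb₀ l₁ hl₁).2⟩, ⟨(hb₀ l₂ hl₂).1, (hb₀ l₂ hl₂).2⟩,
      hwlΛ w hw a (hsfx.subset (List.mem_cons_self))⟩, ?_⟩
    show (wEval l₁)⁻¹ * elt a * wEval l₂ = _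
    simp only [pfun]
    rw [hr₁, hr₂]
  have hHL : H ≤ closure F := by
    rw [← hSgclos]
    refine (closure_le _).mpr ?_
    intro g hg
    have hwmem : word g ∈ wl := hmemwl g hg
    have tel : ∀ s : List (Ltr G), s <:+ word g →
        ∃ c ∈ closure F, wEval s = pfun hcov (ep K s) * c := by
      intro s
      induction s with
      | nil =>
        intro _
        refine ⟨1, one_mem _, ?_⟩
        rw [wEval_nil, ep_nil, pfun_base hT hcov, one_mul]
      | cons a s ih =>
        intro hsfx
        obtain ⟨c, hc, hwe⟩ := ih ((List.suffix_cons a s).trans hsfx)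
        refine ⟨(pfun hcov (ep K (a :: s)))⁻¹ * elt a * pfun hcov (ep K s) * c,
          mul_mem (subset_closure ⟨word g, hwmem, a, s, hsfx, rfl⟩) hc, ?_⟩
        rw [wEval_cons, hwe]
        group
    obtain ⟨c, hc, hwe⟩ := tel (word g) List.suffix_rfl
    have hgK : g ∈ K := hHK (hSgclos ▸ subset_closure hg)
    have hepg : ep K (word g) = bp K := by
      rw [ep, hword g, smul_base, mk_eq_bp_iff]
      exact hgK
    rw [hword g, hepg, pfun_base hT hcov, one_mul] at hwe
    rw [hwe]
    exact hc
  set Aset : Set (Idx hcov) := {e | gE hcov e.1.1 e.1.2 ∈ F ∨ (gE hcov e.1.1 e.1.2)⁻¹ ∈ F}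
    with hAdef
  have hclass : ∀ g ∈ F, g = 1 ∨ (∃ e : Idx hcov, gE hcov e.1.1 e.1.2 = g) ∨
      (∃ e : Idx hcov, (gE hcov e.1.1 e.1.2)⁻¹ = g) := by
    rintro g ⟨w, hw, a, s, hsfx, rfl⟩
    rcases a with ⟨x, b⟩
    have hepc : ep K ((x, b) :: s) = elt ((x, b) : Ltr G) • ep K s := ep_cons K _ s
    cases b
    · rw [elt_false] at hepc
      have hxv' : IsFreeGroup.of x • ep K ((x, false) :: s) = ep K s := by
        rw [hepc, smul_inv_smul]
      have hgval : (pfun hcov (ep K ((x, false) :: s)))⁻¹ * elt ((x, false) : Ltr G) *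
          pfun hcov (ep K s) = (gE hcov x (ep K ((x, false) :: s)))⁻¹ := by
        rw [gE, hxv', elt_false]
        group
      by_cases h1 : gE hcov x (ep K ((x, false) :: s)) = 1
      · left; rw [hgval, h1, inv_one]
      · right; right; exact ⟨⟨(x, ep K ((x, false) :: s)), h1⟩, hgval.symm⟩
    · rw [elt_true] at hepc
      have hgval : (pfun hcov (ep K ((x, true) :: s)))⁻¹ * elt ((x, true) : Ltr G) *
          pfun hcov (ep K s) = gE hcov x (ep K s) := by
        rw [gE, ← hepc, elt_true]
      by_cases h1 : gE hcov x (ep K s) = 1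
      · left; rw [hgval, h1]
      · right; left; exact ⟨⟨(x, ep K s), h1⟩, hgval.symm⟩
  have hclosEq : closure F
      = closure ((fun e : Idx hcov => gE hcov e.1.1 e.1.2) '' Aset) := by
    apply le_antisymm
    · refine (closure_le _).mpr ?_
      intro g hg
      rcases hclass g hg with h | ⟨e, he⟩ | ⟨e, he⟩
      · rw [h]; exact one_mem _
      · exact subset_closure ⟨e, Or.inl (he ▸ hg), he⟩
      · rw [← he]
        exact inv_mem (subset_closure ⟨e, Or.inr (he ▸ hg), rfl⟩)
    · refine (closure_le _).mpr ?_
      rintro g ⟨e, he, rfl⟩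
      rcases he with h | h
      · exact subset_closure h
      · simpa using inv_mem (subset_closure h :
          (gE hcov e.1.1 e.1.2)⁻¹ ∈ Subgroup.closure F)
  refine ⟨closure F, ⟨hHL, F, hF𝒢, rfl⟩, ?_⟩
  rw [hclosEq]
  exact freeFactor_of_subset hT hcov Aset


end TakMach



/-- Abstract properties of subgroups: (i) an intersection closed property yields
closures for all subgroups; (ii) a finite intersection closed and free factor closed
property yields closures for finitely generated subgroups; (iii) if closures exist and
the property is free factor closed, then `H ≤alg cl_P(H)`, and `cl_P(H)` is finitely
generated when `H` is. -/
theorem abstract_property_closures {G : Type*} [Group G] [IsFreeGroup G]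
    (P : Set (Subgroup G)) (htop : ⊤ ∈ P) :
    ((∀ S : Set (Subgroup G), S ⊆ P → sInf S ∈ P) →
      ∀ H : Subgroup G,
        ∃! M : Subgroup G, M ∈ P ∧ H ≤ M ∧ ∀ N ∈ P, H ≤ N → N ≤ M → N = M) ∧
    ((∀ S : Set (Subgroup G), S.Finite → S ⊆ P → sInf S ∈ P) →
      (∀ K ∈ P, ∀ L : Subgroup G, IsFreeFactor L K → L ∈ P) →
      ∀ H : Subgroup G, H.FG →
        ∃! M : Subgroup G, M ∈ P ∧ H ≤ M ∧ ∀ N ∈ P, H ≤ N → N ≤ M → N = M) ∧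
    ((∀ H : Subgroup G,
        ∃! M : Subgroup G, M ∈ P ∧ H ≤ M ∧ ∀ N ∈ P, H ≤ N → N ≤ M → N = M) →
      (∀ K ∈ P, ∀ L : Subgroup G, IsFreeFactor L K → L ∈ P) →
      ∀ H M : Subgroup G,
        (M ∈ P ∧ H ≤ M ∧ ∀ N ∈ P, H ≤ N → N ≤ M → N = M) →
        IsAlgebraicExt H M ∧ (H.FG → M.FG)) := by
  refine ⟨?_, ?_, ?_⟩
  · -- (i)
    intro hint H
    set M : Subgroup G := sInf {N | N ∈ P ∧ H ≤ N} with hM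
    have hMP : M ∈ P := hint _ (fun N hN => hN.1)
    have hHM : H ≤ M := le_sInf (fun N hN => hN.2)
    have hmin : ∀ N ∈ P, H ≤ N → N ≤ M → N = M := by
      intro N hNP hHN hNM
      exact le_antisymm hNM (sInf_le ⟨hNP, hHN⟩)
    refine ⟨M, ⟨hMP, hHM, hmin⟩, ?_⟩
    rintro M' ⟨hM'P, hHM', hmin'⟩
    have h1 : M ≤ M' := sInf_le ⟨hM'P, hHM'⟩
    exact (hmin' M hMP hHM h1).symm
  · -- (ii)
    intro hfin hff H hHfg
    obtain ⟨𝓛, h𝓛fin, h𝓛mem, h𝓛ex⟩ := TakMach.takahasi_fg H hHfg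
    set Y : Set (Subgroup G) := {L | L ∈ 𝓛 ∧ L ∈ P} with hY
    have hYfin : Y.Finite := h𝓛fin.subset (fun L hL => hL.1)
    have hYP : Y ⊆ P := fun L hL => hL.2
    set M : Subgroup G := sInf Y with hM
    have hMP : M ∈ P := hfin Y hYfin hYP
    have hHM : H ≤ M := le_sInf (fun L hL => (h𝓛mem L hL.1).1)
    have hmin : ∀ N ∈ P, H ≤ N → N ≤ M → N = M := by
      intro N hNP hHN hNM
      obtain ⟨L, hL𝓛, hLff⟩ := h𝓛ex N hHN
      have hLP : L ∈ P := hff N hNP L hLff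
      have hML : M ≤ L := sInf_le ⟨hL𝓛, hLP⟩
      have hLN : L ≤ N := TakMach.isFreeFactor_le hLff
      exact le_antisymm hNM (hML.trans hLN)
    refine ⟨M, ⟨hMP, hHM, hmin⟩, ?_⟩
    rintro M' ⟨hM'P, hHM', hmin'⟩
    have hpair : sInf {M, M'} ∈ P := by
      refine hfin {M, M'} ((Set.finite_singleton _).insert _) ?_
      rintro N (rfl | rfl)
      · exact hMP
      · exact hM'P
    have hHpair : H ≤ sInf {M, M'} := le_sInf (by rintro N (rfl | rfl) <;> assumption)
    have h1 : sInf {M, M'} ≤ M := sInf_le (Set.mem_insert _ _)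
    have h2 : sInf {M, M'} ≤ M' := sInf_le (Set.mem_insert_iff.mpr (Or.inr rfl))
    have e1 : sInf {M, M'} = M := hmin _ hpair hHpair h1
    have e2 : sInf {M, M'} = M' := hmin' _ hpair hHpair h2
    rw [← e1, e2]
  · -- (iii)
    intro _ hff H M ⟨hMP, hHM, hmin⟩
    have halg : ∀ x ∈ M, IsAlgebraicOver H M x := by
      intro x hx L hLff hHL
      have hLP : L ∈ P := hff M hMP L hLff
      have hLM : L ≤ M := TakMach.isFreeFactor_le hLff
      rw [hmin L hLP hHL hLM]
      exact hx
    refine ⟨⟨hHM, halg⟩, ?_⟩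
    intro hHfg
    obtain ⟨𝓛, -, h𝓛mem, h𝓛ex⟩ := TakMach.takahasi_fg H hHfg
    obtain ⟨L, hL𝓛, hLff⟩ := h𝓛ex M hHM
    have hLM : L ≤ M := TakMach.isFreeFactor_le hLff
    have hML : M ≤ L := fun x hx => halg x hx L hLff (h𝓛mem L hL𝓛).1
    have : L = M := le_antisymm hLM hML
    exact this ▸ (h𝓛mem L hL𝓛).2
end
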